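/- Let K be an algebraically closed field of characteristic zero. For all but finitely many t ∈ K, the set of points of ℙ³(K) that do not lie on the line l₃ = {x = y = 0} and at which at least four of the eight linear forms P₁ = x, P₂ = y, P₃ = x + y, P₄ = z, P₅ = x + 2y + z + t·v, P₆ = v, P₇ = y + z + v, P₈ = x + y + z + (t − 1)·v vanish has exactly six elements. Thus for generic t the arrangement has exactly six fourfold points not lying on the triple line l₃. -/

import Mathlib

/-!
A point off `l₃` lies on at most one of the planes `x = 0`, `y = 0`, `x + y = 0`, since any two
of them cut out `l₃`. A fourfold point off `l₃` therefore lies on three of the five planes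
`P₄, …, P₈`, and any three of these meet in a single point. The four planes `P₄, P₅, P₇, P₈` are
concurrent, as `P₄ + P₅ = P₇ + P₈`; the other triples all contain `P₆`, and five of them meet on
one of `P₁, P₂, P₃`, while `P₄ ∩ P₅ ∩ P₆ = (−2 : 1 : 0 : 0)` lies on no further plane as `2 ≠ 0`.
This gives exactly six points, for every `t`.
-/

/-- The eight linear forms `P₁ = x`, `P₂ = y`, `P₃ = x + y`, `P₄ = z`,
`P₅ = x + 2y + z + t·v`, `P₆ = v`, `P₇ = y + z + v`, `P₈ = x + y + z + (t − 1)·v`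
on `K⁴` defining the octic arrangement of the double octic family `X_t`. -/
def octicForms (K : Type*) [Field K] (t : K) : Fin 8 → ((Fin 4 → K) → K) :=
  ![fun w => w 0,
    fun w => w 1,
    fun w => w 0 + w 1,
    fun w => w 2,
    fun w => w 0 + 2 * w 1 + w 2 + t * w 3,
    fun w => w 3,
    fun w => w 1 + w 2 + w 3,
    fun w => w 0 + w 1 + w 2 + (t - 1) * w 3]

theorem eq_smul_vec4_iff {R : Type*} [Mul R] {w : Fin 4 → R} {c a₀ a₁ a₂ a₃ : R} :
    w = c • ![a₀, a₁, a₂, a₃] ↔ w 0 = c * a₀ ∧ w 1 = c * a₁ ∧ w 2 = c * a₂ ∧ w 3 = c * a₃ := by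
  simp [funext_iff, Fin.forall_fin_succ]

/- Indices are `0`-based: `i : Fin 8` stands for the plane `P_{i+1}`. -/
set_option maxRecDepth 100000 in
theorem octic_triple_subset_of_four_le_card (s : Finset (Fin 8)) (hs : 4 ≤ s.card)
    (h01 : ¬(0 ∈ s ∧ 1 ∈ s)) (h02 : ¬(0 ∈ s ∧ 2 ∈ s)) (h12 : ¬(1 ∈ s ∧ 2 ∈ s)) :
    ({3, 4, 5} ⊆ s ∧ (0 ∈ s ∨ 1 ∈ s ∨ 2 ∈ s)) ∨ {5, 6, 7} ⊆ s ∨ {3, 5, 7} ⊆ s ∨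
      {4, 5, 6} ⊆ s ∨ {4, 5, 7} ⊆ s ∨ {3, 5, 6} ⊆ s ∨
      ({3, 4, 6} ⊆ s ∨ {3, 4, 7} ⊆ s ∨ {3, 6, 7} ⊆ s ∨ {4, 6, 7} ⊆ s) := by
  revert s
  decide

section

variable {K : Type*} [Field K]

theorem octicForms_smul (t c : K) (i : Fin 8) (w : Fin 4 → K) :
    octicForms K t i (c • w) = c * octicForms K t i w := by
  fin_cases i <;>
    simp only [octicForms, Fin.reduceFinMk, Fin.zero_eta, Fin.mk_one, Fin.isValue, Matrix.cons_val,
      Pi.smul_apply, smul_eq_mul] <;>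
    ring

def IsOcticFourfoldOffTripleLine (t : K) (w : Fin 4 → K) : Prop :=
  ¬(w 0 = 0 ∧ w 1 = 0) ∧ 4 ≤ {i : Fin 8 | octicForms K t i w = 0}.ncard

theorem isOcticFourfoldOffTripleLine_smul_iff {t c : K} (hc : c ≠ 0) {w : Fin 4 → K} :
    IsOcticFourfoldOffTripleLine t (c • w) ↔ IsOcticFourfoldOffTripleLine t w := by
  simp only [IsOcticFourfoldOffTripleLine, octicForms_smul, Pi.smul_apply, smul_eq_mul,
    mul_eq_zero, hc, false_or]

def octicFourfoldVector (t : K) : Fin 6 → Fin 4 → K :=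
  ![![0, 1, -1, 0], ![1, -1, 0, 0], ![1, -1, 1, 0], ![1, 0, -1, 0], ![1, 0, 0, 0],
    ![t - 2, 1, 0, -1]]

theorem octicFourfoldVector_ne_zero (t : K) (j : Fin 6) : octicFourfoldVector t j ≠ 0 := by
  fin_cases j <;> simp [octicFourfoldVector, funext_iff, Fin.forall_fin_succ]

def octicFourfoldPlanes : Fin 6 → Finset (Fin 8) :=
  ![{0, 5, 6, 7}, {2, 3, 5, 7}, {2, 4, 5, 6}, {1, 4, 5, 7}, {1, 3, 5, 6}, {3, 4, 6, 7}]

theorem card_octicFourfoldPlanes (j : Fin 6) : (octicFourfoldPlanes j).card = 4 := by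
  revert j
  decide

theorem octicForms_octicFourfoldVector_eq_zero (t : K) (j : Fin 6) :
    ∀ i ∈ octicFourfoldPlanes j, octicForms K t i (octicFourfoldVector t j) = 0 := by
  fin_cases j <;>
    simp only [octicFourfoldPlanes, octicFourfoldVector, octicForms, Fin.reduceFinMk, Fin.zero_eta,
      Fin.mk_one, Fin.isValue, Matrix.cons_val, Finset.mem_insert, Finset.mem_singleton,
      forall_eq_or_imp, forall_eq] <;>
    grind

theorem isOcticFourfoldOffTripleLine_octicFourfoldVector (t : K) (j : Fin 6) :
    IsOcticFourfoldOffTripleLine t (octicFourfoldVector t j) := by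
  refine ⟨by fin_cases j <;> simp [octicFourfoldVector], ?_⟩
  calc 4 = ((octicFourfoldPlanes j : Finset (Fin 8)) : Set (Fin 8)).ncard := by
        rw [Set.ncard_coe_finset, card_octicFourfoldPlanes]
    _ ≤ _ := Set.ncard_le_ncard (octicForms_octicFourfoldVector_eq_zero t j)

theorem exists_eq_smul_octicFourfoldVector {t : K} (h2 : (2 : K) ≠ 0) {w : Fin 4 → K}
    (hw : IsOcticFourfoldOffTripleLine t w) :
    ∃ j, ∃ c : K, w = c • octicFourfoldVector t j := by
  classical
  obtain ⟨hl₃, h4⟩ := hw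
  rw [← Finset.coe_filter_univ, Set.ncard_coe_finset] at h4
  have key := octic_triple_subset_of_four_le_card _ h4
  simp only [Finset.insert_subset_iff, Finset.singleton_subset_iff, Finset.mem_filter_univ] at key
  simp only [octicForms, Fin.isValue, Matrix.cons_val] at key
  rcases key hl₃ (by grind) (by grind) with h345 | h | h | h | h | h | h
  · -- `P₄ ∩ P₅ ∩ P₆ = (−2 : 1 : 0 : 0)` lies on none of `P₁, P₂, P₃` since `2 ≠ 0`.
    grind
  exacts [⟨0, w 1, eq_smul_vec4_iff.mpr (by grind)⟩, ⟨1, w 0, eq_smul_vec4_iff.mpr (by grind)⟩,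
    ⟨2, w 0, eq_smul_vec4_iff.mpr (by grind)⟩, ⟨3, w 0, eq_smul_vec4_iff.mpr (by grind)⟩,
    ⟨4, w 0, eq_smul_vec4_iff.mpr (by grind)⟩, ⟨5, w 1, eq_smul_vec4_iff.mpr (by grind)⟩]

def octicFourfoldPoint (t : K) (j : Fin 6) : Projectivization K (Fin 4 → K) :=
  .mk K (octicFourfoldVector t j) (octicFourfoldVector_ne_zero t j)

theorem octicFourfoldPoint_injective (t : K) : Function.Injective (octicFourfoldPoint t) := by
  intro i j h
  obtain ⟨a, ha⟩ := (Projectivization.mk_eq_mk_iff' K _ _ _ _).mp h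
  fin_cases i <;> fin_cases j <;>
    simp only [octicFourfoldVector, Fin.reduceFinMk, Fin.zero_eta, Fin.mk_one, Fin.isValue,
      Matrix.cons_val, Matrix.smul_cons, smul_eq_mul, Matrix.smul_empty, Matrix.vecCons_inj] at ha <;>
    first | rfl | grind

theorem setOf_isOcticFourfoldOffTripleLine_rep_eq_range {t : K} (h2 : (2 : K) ≠ 0) :
    {p : Projectivization K (Fin 4 → K) | IsOcticFourfoldOffTripleLine t p.rep} =
      Set.range (octicFourfoldPoint t) := by
  ext p
  constructor
  · intro hp
    obtain ⟨j, c, hc⟩ := exists_eq_smul_octicFourfoldVector h2 hp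
    refine ⟨j, ?_⟩
    rw [← p.mk_rep, octicFourfoldPoint, eq_comm, Projectivization.mk_eq_mk_iff']
    exact ⟨c, hc.symm⟩
  · rintro ⟨j, rfl⟩
    obtain ⟨a, ha⟩ :=
      Projectivization.exists_smul_eq_mk_rep K _ (octicFourfoldVector_ne_zero t j)
    rw [Set.mem_ofPred_eq, octicFourfoldPoint, ← ha, Units.smul_def,
      isOcticFourfoldOffTripleLine_smul_iff a.ne_zero]
    exact isOcticFourfoldOffTripleLine_octicFourfoldVector t j

end

theorem octic_six_fourfold_points_off_triple_line_general (K : Type*) [Field K]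
    [CharZero K] :
    ∃ S : Set K, S.Finite ∧ ∀ t : K, t ∉ S →
      {p : Projectivization K (Fin 4 → K) |
        ¬(p.rep 0 = 0 ∧ p.rep 1 = 0) ∧
        4 ≤ {i : Fin 8 | octicForms K t i p.rep = 0}.ncard}.ncard = 6 := by
  refine ⟨∅, Set.finite_empty, fun t _ => ?_⟩
  change {p : Projectivization K (Fin 4 → K) | IsOcticFourfoldOffTripleLine t p.rep}.ncard = 6
  rw [setOf_isOcticFourfoldOffTripleLine_rep_eq_range two_ne_zero,
    Set.ncard_range_of_injective (octicFourfoldPoint_injective t), Nat.card_fin]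

/-- Over an algebraically closed field of characteristic zero, for all but finitely
many `t` the set of points of `ℙ³(K)` not lying on the line `l₃ = {x = y = 0}` at
which at least four of the eight forms vanish has exactly six elements: for generic
`t` the arrangement has exactly six fourfold points off the triple line `l₃`. -/
theorem octic_six_fourfold_points_off_triple_line (K : Type*) [Field K] [IsAlgClosed K]
    [CharZero K] :
    ∃ S : Set K, S.Finite ∧ ∀ t : K, t ∉ S →
      {p : Projectivization K (Fin 4 → K) |
        ¬(p.rep 0 = 0 ∧ p.rep 1 = 0) ∧
        4 ≤ {i : Fin 8 | octicForms K t i p.rep = 0}.ncard}.ncard = 6 :=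
  octic_six_fourfold_points_off_triple_line_general K
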